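/- arXiv:1304.4586 — 2 statements merged into one kernel-verified Lean document; each statement's English description precedes it below -/
import Mathlib

section
/- Let $u(x,t)$ be a smooth complex-valued function and $\varepsilon = 1$. Define the $3\times 3$ matrices $\Lambda = \mathrm{diag}(1,1,-1)$, $V_1 = \begin{pmatrix} 0 & 0 & u \\ 0 & 0 & \bar u \\ -\bar u & -u & 0 \end{pmatrix}$, $U = -ik\Lambda + V_1$, and $V = -4ik^3\Lambda + k^2 V_2^{(2)} + k V_2^{(1)} + V_2^{(0)}$ where $V_2^{(2)} = 4V_1$, $V_2^{(1)} = 2i\begin{pmatrix} |u|^2 & u^2 & u_x \\ \bar u^2 & |u|^2 & \bar u_x \\ \bar u_x & u_x & -2|u|^2 \end{pmatrix}$, $V_2^{(0)} = -4|u|^2 V_1 - \begin{pmatrix} 0 & 0 & u_{xx} \\ 0 & 0 & \bar u_{xx} \\ -\bar u_{xx} & -u_{xx} & 0 \end{pmatrix} + (u\bar u_x - u_x\bar u)\,\mathrm{diag}(1,-1,0)$. If the zero-curvature condition $U_t - V_x + [U,V] = 0$ holds for all $k \in \mathbb{C}$, then $u$ satisfies $u_t + u_{xxx} + 6|u|^2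 u_x + 3u(|u|^2)_x = 0$. -/
open Complex Matrix

noncomputable section

/-- Partial derivative in the first (space) variable. -/
def pdx (f : ℝ → ℝ → ℂ) : ℝ → ℝ → ℂ := fun x t => deriv (fun x' => f x' t) x

/-- Partial derivative in the second (time) variable. -/
def pdt (f : ℝ → ℝ → ℂ) : ℝ → ℝ → ℂ := fun x t => deriv (fun t' => f x t') t

def Lam : Matrix (Fin 3) (Fin 3) ℂ := !![1, 0, 0; 0, 1, 0; 0, 0, -1]

def V1m (a : ℂ) : Matrix (Fin 3) (Fin 3) ℂ :=
  !![0, 0, a; 0, 0, (starRingEnd ℂ) a; -(starRingEnd ℂ) a, -a, 0]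

/-- The `x`-part matrix `U = -ikΛ + V₁`. -/
def Umat (u : ℝ → ℝ → ℂ) (x t : ℝ) (k : ℂ) : Matrix (Fin 3) (Fin 3) ℂ :=
  (-(I * k)) • Lam + V1m (u x t)

/-- The `t`-part matrix `V = -4ik³Λ + k²V₂⁽²⁾ + kV₂⁽¹⁾ + V₂⁽⁰⁾` (with `ε = 1`). -/
def Vmat (u : ℝ → ℝ → ℂ) (x t : ℝ) (k : ℂ) : Matrix (Fin 3) (Fin 3) ℂ :=
  (-(4 * I * k ^ 3)) • Lam + (4 * k ^ 2) • V1m (u x t)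
    + (2 * I * k) •
        !![u x t * (starRingEnd ℂ) (u x t), (u x t) ^ 2, pdx u x t;
           ((starRingEnd ℂ) (u x t)) ^ 2, u x t * (starRingEnd ℂ) (u x t),
             (starRingEnd ℂ) (pdx u x t);
           (starRingEnd ℂ) (pdx u x t), pdx u x t,
             -2 * (u x t * (starRingEnd ℂ) (u x t))]
    + (-(4 * (u x t * (starRingEnd ℂ) (u x t)))) • V1m (u x t)
    - V1m (pdx (pdx u) x t)
    + (u x t * (starRingEnd ℂ) (pdx u x t) - pdx u x t * (starRingEnd ℂ) (u x t)) •
        !![1, 0, 0; 0, -1, 0; 0, 0, 0]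

theorem zero_curvature_implies_mkdv
    (u : ℝ → ℝ → ℂ) (hu : ContDiff ℝ (⊤ : ℕ∞) (fun p : ℝ × ℝ => u p.1 p.2))
    (h : ∀ (x t : ℝ) (k : ℂ),
      (Matrix.of fun i j => deriv (fun t' => Umat u x t' k i j) t)
        - (Matrix.of fun i j => deriv (fun x' => Vmat u x' t k i j) x)
        + (Umat u x t k * Vmat u x t k - Vmat u x t k * Umat u x t k) = 0) :
    ∀ x t : ℝ,
      pdt u x t + (pdx (pdx (pdx u)) x t
        + 6 * (u x t * (starRingEnd ℂ) (u x t)) * pdx u x t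
        + 3 * u x t * pdx (fun x' t' => u x' t' * (starRingEnd ℂ) (u x' t')) x t) = 0 := by
  intro x t
  have h02 := congrFun (congrFun (h x t 0) 0) 2
  simp only [Umat, Vmat, Lam, V1m, Matrix.sub_apply, Matrix.add_apply, Matrix.smul_apply,
    Matrix.of_apply, Matrix.mul_apply, Fin.sum_univ_three, Matrix.cons_val_zero,
    Matrix.cons_val_one, Matrix.head_cons, Matrix.cons_val_two, Matrix.tail_cons,
    Matrix.head_fin_const, Matrix.zero_apply, smul_eq_mul, mul_zero, zero_mul, add_zero,
    zero_add, neg_zero, mul_one, ne_eq, OfNat.ofNat_ne_zero, not_false_eq_true, zero_pow,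
    mul_neg, neg_neg] at h02
  simp only [pdx, pdt] at h02 ⊢
  -- differentiability of f := fun x' => u x' t and its derivatives
  have hcf : ContDiff ℝ (⊤ : ℕ∞) (fun x' : ℝ => u x' t) :=
    (hu.of_le (by simp)).comp (contDiff_id.prodMk contDiff_const)
  have hd1 : Differentiable ℝ (fun x' : ℝ => u x' t) := hcf.differentiable (by simp)
  have hcf1 : ContDiff ℝ (⊤ : ℕ∞) (deriv (fun x' : ℝ => u x' t)) :=
    (contDiff_infty_iff_deriv.mp hcf).2
  have hd2 : Differentiable ℝ (deriv (fun x' : ℝ => u x' t)) := hcf1.differentiable (by simp)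
  have hcf2 : ContDiff ℝ (⊤ : ℕ∞) (deriv (deriv (fun x' : ℝ => u x' t))) :=
    (contDiff_infty_iff_deriv.mp hcf1).2
  have hd3 : Differentiable ℝ (deriv (deriv (fun x' : ℝ => u x' t))) :=
    hcf2.differentiable (by simp)
  have h1 : HasDerivAt (fun x' : ℝ => u x' t) (deriv (fun x' : ℝ => u x' t) x) x :=
    (hd1 x).hasDerivAt
  have h3 : HasDerivAt (deriv (deriv (fun x' : ℝ => u x' t)))
      (deriv (deriv (deriv (fun x' : ℝ => u x' t))) x) x := (hd3 x).hasDerivAt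
  have hc : HasDerivAt (fun x' : ℝ => (starRingEnd ℂ) (u x' t))
      ((starRingEnd ℂ) (deriv (fun x' : ℝ => u x' t) x)) x := by
    simpa only [starRingEnd_apply] using h1.star
  have e1 : deriv (fun x' =>
      -(4 * (u x' t * (starRingEnd ℂ) (u x' t))) * u x' t
        - deriv (fun x' => deriv (fun x' => u x' t) x') x') x
      = -(4 * (deriv (fun x' : ℝ => u x' t) x * (starRingEnd ℂ) (u x t)
            + u x t * (starRingEnd ℂ) (deriv (fun x' : ℝ => u x' t) x))) * u x t
        + -(4 * (u x t * (starRingEnd ℂ) (u x t))) * deriv (fun x' : ℝ => u x' t) x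
        - deriv (fun x' => deriv (fun x' => deriv (fun x' => u x' t) x') x') x :=
    (((((h1.mul hc).const_mul (4:ℂ)).neg.mul h1).sub h3)).deriv
  have e2 : deriv (fun x' => u x' t * (starRingEnd ℂ) (u x' t)) x
      = deriv (fun x' : ℝ => u x' t) x * (starRingEnd ℂ) (u x t)
        + u x t * (starRingEnd ℂ) (deriv (fun x' : ℝ => u x' t) x) := (h1.mul hc).deriv
  rw [e1] at h02
  rw [e2]
  linear_combination h02
end
end

section
/- Conversely, with the same definitions of $U$ and $V$ (for $\varepsilon = 1$), if $u$ satisfies the complex mKdV-type equation $u_t + u_{xxx} + 6|u|^2 u_x + 3u(|u|^2)_x = 0$, then the zero-curvature condition $U_t - V_x + [U,V] = 0$ holds identically in the spectral parameter $k$. -/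
open Complex Matrix

noncomputable section

lemma hasDerivAt_conj' {f : ℝ → ℂ} {f' : ℂ} {x : ℝ} (hf : HasDerivAt f f' x) :
    HasDerivAt (fun y => (starRingEnd ℂ) (f y)) ((starRingEnd ℂ) f') x := by
  have := (Complex.conjCLE.toContinuousLinearMap.hasFDerivAt (x := f x)).comp_hasDerivAt x hf
  exact this

lemma pdx_eq_fderiv {f : ℝ → ℝ → ℂ} (hf : ContDiff ℝ (⊤ : ℕ∞) (fun p : ℝ × ℝ => f p.1 p.2))
    (x t : ℝ) : pdx f x t = (fderiv ℝ (fun p : ℝ × ℝ => f p.1 p.2) (x, t)) (1, 0) := by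
  have hF : HasFDerivAt (fun p : ℝ × ℝ => f p.1 p.2)
      (fderiv ℝ (fun p : ℝ × ℝ => f p.1 p.2) (x, t)) (x, t) :=
    (hf.differentiable (by simp) (x, t)).hasFDerivAt
  have hL : HasDerivAt (fun x' : ℝ => ((x', t) : ℝ × ℝ)) ((1 : ℝ), (0 : ℝ)) x :=
    HasDerivAt.prodMk (hasDerivAt_id x) (hasDerivAt_const x t)
  exact (hF.comp_hasDerivAt x hL).deriv

lemma pdx_contDiff {f : ℝ → ℝ → ℂ} (hf : ContDiff ℝ (⊤ : ℕ∞) (fun p : ℝ × ℝ => f p.1 p.2)) :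
    ContDiff ℝ (⊤ : ℕ∞) (fun p : ℝ × ℝ => pdx f p.1 p.2) := by
  have : (fun p : ℝ × ℝ => pdx f p.1 p.2)
      = fun p : ℝ × ℝ => (fderiv ℝ (fun q : ℝ × ℝ => f q.1 q.2) p) ((1 : ℝ), (0 : ℝ)) := by
    funext p; exact pdx_eq_fderiv hf p.1 p.2
  rw [this]
  exact (hf.fderiv_right (by simp)).clm_apply contDiff_const

lemma hasDerivAt_pdx {f : ℝ → ℝ → ℂ} (hf : ContDiff ℝ (⊤ : ℕ∞) (fun p : ℝ × ℝ => f p.1 p.2))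
    (x t : ℝ) : HasDerivAt (fun x' => f x' t) (pdx f x t) x := by
  have : DifferentiableAt ℝ (fun x' => f x' t) x :=
    ((hf.comp (contDiff_id.prodMk contDiff_const)).differentiable (by simp)) x
  exact this.hasDerivAt

lemma hasDerivAt_pdt {f : ℝ → ℝ → ℂ} (hf : ContDiff ℝ (⊤ : ℕ∞) (fun p : ℝ × ℝ => f p.1 p.2))
    (x t : ℝ) : HasDerivAt (fun t' => f x t') (pdt f x t) t := by
  have : DifferentiableAt ℝ (fun t' => f x t') t :=
    ((hf.comp (contDiff_const.prodMk contDiff_id)).differentiable (by simp)) t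
  exact this.hasDerivAt


lemma deriv_EQ {f : ℝ → ℂ} {d e : ℂ} {x : ℝ} (H : HasDerivAt f d x) (hde : d = e) :
    deriv f x = e := H.deriv.trans hde


set_option maxHeartbeats 1000000 in
lemma hVx (u : ℝ → ℝ → ℂ) (hu : ContDiff ℝ (⊤ : ℕ∞) (fun p : ℝ × ℝ => u p.1 p.2)) (x t : ℝ) (k : ℂ) :
    (Matrix.of fun i j => deriv (fun x' => Vmat u x' t k i j) x)
      = !![2*I*k*(pdx u x t * (starRingEnd ℂ) (u x t) + u x t * (starRingEnd ℂ) (pdx u x t))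
             + (u x t * (starRingEnd ℂ) (pdx (pdx u) x t) - pdx (pdx u) x t * (starRingEnd ℂ) (u x t)),
           4*I*k*(u x t * pdx u x t),
           4*k^2*(pdx u x t) + 2*I*k*(pdx (pdx u) x t)
             - 4*(pdx u x t * (starRingEnd ℂ) (u x t) + u x t * (starRingEnd ℂ) (pdx u x t))*(u x t)
             - 4*(u x t * (starRingEnd ℂ) (u x t))*(pdx u x t) - pdx (pdx (pdx u)) x t;
           4*I*k*((starRingEnd ℂ) (u x t) * (starRingEnd ℂ) (pdx u x t)),
           2*I*k*(pdx u x t * (starRingEnd ℂ) (u x t) + u x t * (starRingEnd ℂ) (pdx u x t))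
             - (u x t * (starRingEnd ℂ) (pdx (pdx u) x t) - pdx (pdx u) x t * (starRingEnd ℂ) (u x t)),
           4*k^2*((starRingEnd ℂ) (pdx u x t)) + 2*I*k*((starRingEnd ℂ) (pdx (pdx u) x t))
             - 4*(pdx u x t * (starRingEnd ℂ) (u x t) + u x t * (starRingEnd ℂ) (pdx u x t))*((starRingEnd ℂ) (u x t))
             - 4*(u x t * (starRingEnd ℂ) (u x t))*((starRingEnd ℂ) (pdx u x t))
             - (starRingEnd ℂ) (pdx (pdx (pdx u)) x t);
           -(4*k^2*((starRingEnd ℂ) (pdx u x t))) + 2*I*k*((starRingEnd ℂ) (pdx (pdx u) x t))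
             + 4*(pdx u x t * (starRingEnd ℂ) (u x t) + u x t * (starRingEnd ℂ) (pdx u x t))*((starRingEnd ℂ) (u x t))
             + 4*(u x t * (starRingEnd ℂ) (u x t))*((starRingEnd ℂ) (pdx u x t))
             + (starRingEnd ℂ) (pdx (pdx (pdx u)) x t),
           -(4*k^2*(pdx u x t)) + 2*I*k*(pdx (pdx u) x t)
             + 4*(pdx u x t * (starRingEnd ℂ) (u x t) + u x t * (starRingEnd ℂ) (pdx u x t))*(u x t)
             + 4*(u x t * (starRingEnd ℂ) (u x t))*(pdx u x t) + pdx (pdx (pdx u)) x t,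
           -(4*I*k)*(pdx u x t * (starRingEnd ℂ) (u x t) + u x t * (starRingEnd ℂ) (pdx u x t))] := by

  have hu1 := pdx_contDiff hu
  have hu2 := pdx_contDiff hu1
  have ha := hasDerivAt_pdx hu x t
  have hb := hasDerivAt_conj' ha
  have hp := hasDerivAt_pdx hu1 x t
  have hq := hasDerivAt_conj' hp
  have hr := hasDerivAt_pdx hu2 x t
  have hz := hasDerivAt_conj' hr
  ext i j
  fin_cases i
  · fin_cases j
    · simp [Vmat, Lam, V1m]
      exact deriv_EQ (((hasDerivAt_const x (-(4*I*k^3))).add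
        ((ha.mul hb).const_mul (2*I*k))).add ((ha.mul hq).sub (hp.mul hb))) (by ring)
    · simp [Vmat, Lam, V1m]
      simp only [pow_two]
      have e := (ha.mul ha).deriv; simp only [Pi.mul_def] at e; rw [e]; ring
    · simp [Vmat, Lam, V1m]
      exact deriv_EQ ((((ha.const_mul (4*k^2)).add (hp.const_mul (2*I*k))).add
        (((ha.mul hb).const_mul 4).mul ha).neg).sub hr) (by simp only [Pi.mul_apply]; ring)
  · fin_cases j
    · simp [Vmat, Lam, V1m]
      simp only [pow_two]
      have e := (hb.mul hb).deriv; simp only [Pi.mul_def] at e; rw [e]; ring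
    · simp [Vmat, Lam, V1m]
      exact deriv_EQ (((hasDerivAt_const x (-(4*I*k^3))).add
        ((ha.mul hb).const_mul (2*I*k))).add ((hp.mul hb).sub (ha.mul hq))) (by ring)
    · simp [Vmat, Lam, V1m]
      exact deriv_EQ ((((hb.const_mul (4*k^2)).add (hq.const_mul (2*I*k))).add
        (((ha.mul hb).const_mul 4).mul hb).neg).sub hz) (by simp only [Pi.mul_apply]; ring)
  · fin_cases j
    · simp [Vmat, Lam, V1m]
      exact deriv_EQ ((((hb.const_mul (4*k^2)).neg.add (hq.const_mul (2*I*k))).add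
        (((ha.mul hb).const_mul 4).mul hb)).add hz) (by simp only [Pi.mul_apply]; ring)
    · simp [Vmat, Lam, V1m]
      exact deriv_EQ ((((ha.const_mul (4*k^2)).neg.add (hp.const_mul (2*I*k))).add
        (((ha.mul hb).const_mul 4).mul ha)).add hr) (by simp only [Pi.mul_apply]; ring)
    · simp [Vmat, Lam, V1m]
      have e := (ha.mul hb).deriv; simp only [Pi.mul_def] at e; rw [e]; ring


set_option maxHeartbeats 1000000 in
lemma hUt_lem (u : ℝ → ℝ → ℂ) (hu : ContDiff ℝ (⊤ : ℕ∞) (fun p : ℝ × ℝ => u p.1 p.2)) (x t : ℝ) (k : ℂ) :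
    (Matrix.of fun i j => deriv (fun t' => Umat u x t' k i j) t) = V1m (pdt u x t) := by
  have hm := hasDerivAt_pdt hu x t
  ext i j
  fin_cases i <;> fin_cases j <;>
    simp [Umat, Lam, V1m] <;>
    first
      | rfl
      | exact (hasDerivAt_conj' hm).deriv

set_option maxHeartbeats 4000000 in
theorem mkdv_implies_zero_curvature
    (u : ℝ → ℝ → ℂ) (hu : ContDiff ℝ (⊤ : ℕ∞) (fun p : ℝ × ℝ => u p.1 p.2))
    (h : ∀ x t : ℝ,
      pdt u x t + (pdx (pdx (pdx u)) x t
        + 6 * (u x t * (starRingEnd ℂ) (u x t)) * pdx u x t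
        + 3 * u x t * pdx (fun x' t' => u x' t' * (starRingEnd ℂ) (u x' t')) x t) = 0) :
    ∀ (x t : ℝ) (k : ℂ),
      (Matrix.of fun i j => deriv (fun t' => Umat u x t' k i j) t)
        - (Matrix.of fun i j => deriv (fun x' => Vmat u x' t k i j) x)
        + (Umat u x t k * Vmat u x t k - Vmat u x t k * Umat u x t k) = 0 := by
  intro x t k
  have ha := hasDerivAt_pdx hu x t
  have hb := hasDerivAt_conj' ha
  have hprod : pdx (fun x' t' => u x' t' * (starRingEnd ℂ) (u x' t')) x t
      = pdx u x t * (starRingEnd ℂ) (u x t) + u x t * (starRingEnd ℂ) (pdx u x t) :=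
    (ha.mul hb).deriv
  have hPDE := h x t
  rw [hprod] at hPDE
  have hPDEc := congrArg (starRingEnd ℂ) hPDE
  simp only [map_add, _root_.map_mul, map_ofNat, map_zero, Complex.conj_conj] at hPDEc
  rw [hUt_lem u hu x t k, hVx u hu x t k]
  ext i j
  fin_cases i <;> fin_cases j <;>
    simp [Umat, Vmat, Lam, V1m, Matrix.mul_apply, Fin.sum_univ_three] <;>
    first
      | ring1
      | linear_combination hPDE + (-(4*k^2*pdx u x t))*Complex.I_sq
      | linear_combination hPDEc + (-(4*k^2*(starRingEnd ℂ) (pdx u x t)))*Complex.I_sq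
      | linear_combination -hPDEc + (4*k^2*(starRingEnd ℂ) (pdx u x t))*Complex.I_sq
      | linear_combination -hPDE + (4*k^2*pdx u x t)*Complex.I_sq
end
end
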